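/- For every integer n ≥ 2, the identity Σ_{w=1}^{n−1} C(n−1,w)·2^{n−w}·w·C(w−1, ⌈w/2⌉−1) = (n−1)·C(2n−2, n−1) holds. Consequently, the subcube C_{n−1} = {0,1}^{n−1}×{0} ⊆ {0,1}^n has quadratic discrepancy D^{L2}(C_{n−1}) = (n/2^{n+1})·C(2n,n) − ((n−1)/2^{n−1})·C(2n−2,n−1). -/

import Mathlib

/-- The quadratic discrepancy of a code `Z ⊆ {0,1}^n`. -/
noncomputable def disc (n : ℕ) (Z : Finset (Fin n → Bool)) : ℝ :=
  ∑ t ∈ Finset.range (n + 1), ∑ x : Fin n → Bool,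
    ((Z.card : ℝ)⁻¹ * ((Z.filter (fun z => hammingDist x z ≤ t)).card : ℝ)
      - ((2 : ℝ) ^ n)⁻¹ *
          ((Finset.univ.filter (fun z : Fin n → Bool => hammingDist x z ≤ t)).card : ℝ)) ^ 2

/-!
The binomial identity is a coefficient extraction: comparing coefficients of `X ^ m` in
`(1 + X) ^ (2m + 1) = (1 + X) * ((1 + X ^ 2) + 2X) ^ m` gives
`∑ k, C(m, k) 2 ^ (m - k) C(k, ⌊k/2⌋) = C(2m + 1, m)`, since `C(k, ⌊k/2⌋)` is the coefficient of
`X ^ k` in `(1 + X) (1 + X ^ 2) ^ k`; the factor `w` of the sum is absorbed by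
`w C(n - 1, w) = (n - 1) C(n - 2, w - 1)`.

For the discrepancy write `n = N + 1`, fix a coordinate `i` and split `{0,1}^n` into the subcube
`Z = {z | z i = b}` and its complement `Z'`. The parts of a ball `B(x, t)` in the half containing
`x` and in the other half are balls of radii `t` and `t - 1` in `{0,1}^N`, so their sizes differ
by the sphere size `C(N, t)`. As `|Z| = 2 ^ N`, the `(x, t)` term of `D^{L2}(Z)` is
`((|Z ∩ B| - |Z' ∩ B|) / 2 ^ n) ^ 2 = C(N, t) ^ 2 / 4 ^ n`, independent of `x`, and Vandermonde's
identity gives `D^{L2}(Z) = C(2N, N) / 2 ^ n`. This is the stated expression because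
`n C(2n, n) = 2 (2n - 1) C(2n - 2, n - 1)`.
-/

open Finset Polynomial

lemma coeff_one_add_X_sq_pow (k d : ℕ) :
    ((1 + X ^ 2 : ℕ[X]) ^ k).coeff d = if 2 ∣ d then k.choose (d / 2) else 0 := by
  have : (1 + X ^ 2 : ℕ[X]) ^ k = expand ℕ 2 ((1 + X) ^ k) := by simp
  rw [this, coeff_expand two_pos, coeff_one_add_X_pow, Nat.cast_id]

lemma coeff_one_add_X_mul_one_add_X_sq_pow (k : ℕ) :
    ((1 + X) * (1 + X ^ 2) ^ k : ℕ[X]).coeff k = k.choose (k / 2) := by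
  rw [show ((1 + X) * (1 + X ^ 2) ^ k : ℕ[X]) = (1 + X ^ 2) ^ k + (1 + X ^ 2) ^ k * X ^ 1 by ring,
    coeff_add, coeff_mul_X_pow', coeff_one_add_X_sq_pow, coeff_one_add_X_sq_pow]
  obtain ⟨j, rfl | rfl⟩ := Nat.even_or_odd' k
  · rcases j with _ | j
    · simp
    · rw [if_pos (by omega), if_pos (by omega), if_neg (by omega), add_zero]
  · rw [if_neg (by omega), if_pos (by omega), if_pos (by omega), zero_add]
    congr 1
    omega

lemma sum_choose_mul_two_pow_mul_choose_half (m : ℕ) :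
    ∑ k ∈ range (m + 1), m.choose k * 2 ^ (m - k) * k.choose (k / 2) = (2 * m + 1).choose m := by
  have hexp : ((1 + X) ^ (2 * m + 1) : ℕ[X]) = ∑ k ∈ range (m + 1),
      (1 + X) * (1 + X ^ 2) ^ k * C (m.choose k * 2 ^ (m - k)) * X ^ (m - k) := by
    rw [pow_succ', pow_mul, show (1 + X : ℕ[X]) ^ 2 = (1 + X ^ 2) + C 2 * X by rw [C_ofNat]; ring,
      add_pow, mul_sum]
    refine sum_congr rfl fun k _ => ?_
    simp only [mul_pow, ← C_pow, map_mul, ← C_eq_natCast, Nat.cast_id]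
    ring
  rw [← Nat.cast_id ((2 * m + 1).choose m), ← coeff_one_add_X_pow, hexp, finsetSum_coeff]
  refine sum_congr rfl fun k hk => ?_
  have hkm : k ≤ m := Nat.lt_succ_iff.mp (mem_range.mp hk)
  rw [coeff_mul_X_pow', if_pos (by omega), coeff_mul_C, Nat.sub_sub_self hkm,
    coeff_one_add_X_mul_one_add_X_sq_pow]
  ring

lemma sum_Icc_choose_mul_two_pow_mul_choose (N : ℕ) :
    ∑ w ∈ Icc 1 N, N.choose w * 2 ^ (N + 1 - w) * w * (w - 1).choose ((w + 1) / 2 - 1)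
      = N * (2 * N).choose N := by
  rcases N with _ | m
  · simp
  have hterm : ∀ k ∈ range (m + 1),
      (m + 1).choose (1 + k) * 2 ^ (m + 2 - (1 + k)) * (1 + k)
          * (1 + k - 1).choose ((1 + k + 1) / 2 - 1)
        = 2 * (m + 1) * (m.choose k * 2 ^ (m - k) * k.choose (k / 2)) := by
    intro k hk
    have hkm : k ≤ m := Nat.lt_succ_iff.mp (mem_range.mp hk)
    rw [show m + 2 - (1 + k) = m - k + 1 by omega, show (1 + k + 1) / 2 - 1 = k / 2 by omega,
      add_comm 1 k, Nat.add_sub_cancel, mul_right_comm _ _ (k + 1), ← Nat.add_one_mul_choose_eq,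
      pow_succ]
    ring
  rw [← Ico_add_one_right_eq_Icc, sum_Ico_eq_sum_range, Nat.add_sub_cancel, sum_congr rfl hterm,
    ← mul_sum, sum_choose_mul_two_pow_mul_choose_half,
    show 2 * (m + 1) = 2 * m + 1 + 1 by ring, Nat.choose_succ_succ, Nat.choose_symm_half]
  ring

section HammingCube

variable {ι : Type*} [Fintype ι] [DecidableEq ι]

lemma card_filter_hammingDist_eq (x : ι → Bool) (k : ℕ) :
    #{z | hammingDist x z = k} = (Fintype.card ι).choose k := by
  rw [← card_univ, ← card_powersetCard]
  refine card_nbij' (fun z => ({j | x j ≠ z j} : Finset ι)) (fun D j => xor (x j) (decide (j ∈ D)))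
    ?_ ?_ ?_ ?_
  · intro z hz
    simpa [mem_powersetCard, hammingDist] using hz
  · intro D hD
    simp only [mem_coe, mem_powersetCard, mem_filter, mem_univ, true_and] at hD ⊢
    rw [← hD.2, hammingDist]
    congr 1
    ext j
    cases hx : x j <;> simp [hx]
  · intro z _
    funext j
    cases hx : x j <;> cases hz : z j <;> simp [hx, hz]
  · intro D _
    ext j
    cases hx : x j <;> simp [hx]

lemma card_filter_hammingDist_le_eq_add (x : ι → Bool) (t : ℕ) :
    #{y | hammingDist x y ≤ t} = #{y | 1 + hammingDist x y ≤ t} + (Fintype.card ι).choose t := by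
  rw [← card_filter_hammingDist_eq x t, ← card_union_of_disjoint
    (disjoint_filter.2 fun y _ h₁ h₂ => by omega)]
  congr 1
  ext y
  simp only [mem_filter, mem_univ, true_and, mem_union]
  omega

lemma card_filter_eq_add_card_filter_apply_eq (i : ι) (b : Bool) (q : (ι → Bool) → Prop)
    [DecidablePred q] :
    #{z | q z} = #((univ.filter fun z : ι → Bool => z i = b).filter q)
      + #((univ.filter fun z : ι → Bool => z i = !b).filter q) := by
  rw [filter_filter, filter_filter,
    ← card_union_of_disjoint (disjoint_filter.2 fun z _ h => by simp [h])]
  congr 1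
  ext z
  cases h : z i <;> cases b <;> simp [h]

end HammingCube

section Subcube

variable {n : ℕ} (i : Fin (n + 1))

lemma hammingDist_insertNth (a b : Bool) (x y : Fin n → Bool) :
    hammingDist (i.insertNth a x : Fin (n + 1) → Bool) (i.insertNth b y)
      = (if a = b then 0 else 1) + hammingDist x y := by
  simp only [hammingDist, card_filter, Fin.sum_univ_succAbove _ i, Fin.insertNth_apply_same,
    Fin.insertNth_apply_succAbove, ite_not]

lemma card_filter_filter_apply_eq (b : Bool) (q : (Fin (n + 1) → Bool) → Prop) [DecidablePred q] :
    #((univ.filter fun z : Fin (n + 1) → Bool => z i = b).filter q)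
      = #{y : Fin n → Bool | q (i.insertNth b y)} := by
  refine card_nbij' i.removeNth (fun y => i.insertNth b y) ?_ ?_ ?_ ?_
  · intro z hz
    simp only [mem_coe, mem_filter, mem_univ, true_and] at hz ⊢
    rw [← hz.1, Fin.insertNth_self_removeNth]
    exact hz.2
  · intro y hy
    simpa using hy
  · intro z hz
    simp only [mem_coe, mem_filter, mem_univ, true_and] at hz
    simp only [← hz.1, Fin.insertNth_self_removeNth]
  · intro y _
    simp

lemma card_filter_apply_eq (b : Bool) :
    #(univ.filter fun z : Fin (n + 1) → Bool => z i = b) = 2 ^ n := by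
  simpa using card_filter_filter_apply_eq i b fun _ => True

lemma card_subcube_inter_ball_eq_add (a : Bool) (x : Fin n → Bool) (t : ℕ) :
    #((univ.filter fun z : Fin (n + 1) → Bool => z i = a).filter
        fun z => hammingDist (i.insertNth a x : Fin (n + 1) → Bool) z ≤ t)
      = #((univ.filter fun z : Fin (n + 1) → Bool => z i = !a).filter
        fun z => hammingDist (i.insertNth a x : Fin (n + 1) → Bool) z ≤ t) + n.choose t := by
  simp only [card_filter_filter_apply_eq, hammingDist_insertNth, if_true, Bool.eq_not_self,
    if_false, zero_add]
  rw [card_filter_hammingDist_le_eq_add, Fintype.card_fin]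

lemma sq_card_subcube_inter_ball_sub (b : Bool) (x : Fin (n + 1) → Bool) (t : ℕ) :
    ((#((univ.filter fun z : Fin (n + 1) → Bool => z i = b).filter
        fun z => hammingDist x z ≤ t) : ℝ)
      - #((univ.filter fun z : Fin (n + 1) → Bool => z i = !b).filter
        fun z => hammingDist x z ≤ t)) ^ 2 = (n.choose t : ℝ) ^ 2 := by
  obtain ⟨a, x, rfl⟩ : ∃ a x', x = i.insertNth a x' :=
    ⟨x i, i.removeNth x, (i.insertNth_self_removeNth x).symm⟩
  obtain rfl | rfl : b = a ∨ b = !a := by cases a <;> cases b <;> simp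
  · rw [card_subcube_inter_ball_eq_add]
    push_cast
    ring
  · rw [Bool.not_not, card_subcube_inter_ball_eq_add]
    push_cast
    ring

lemma subcube_discrepancy_term (b : Bool) (x : Fin (n + 1) → Bool) (t : ℕ) :
    ((#(univ.filter fun z : Fin (n + 1) → Bool => z i = b) : ℝ)⁻¹
        * #((univ.filter fun z : Fin (n + 1) → Bool => z i = b).filter
          fun z => hammingDist x z ≤ t)
      - ((2 : ℝ) ^ (n + 1))⁻¹ * #(univ.filter fun z : Fin (n + 1) → Bool => hammingDist x z ≤ t))
        ^ 2 = (n.choose t : ℝ) ^ 2 / 2 ^ (2 * n + 2) := by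
  rw [card_filter_eq_add_card_filter_apply_eq i b (fun z => hammingDist x z ≤ t),
    card_filter_apply_eq, ← sq_card_subcube_inter_ball_sub i b x t]
  push_cast
  field_simp
  ring

end Subcube

theorem disc_subcube (n : ℕ) (i : Fin (n + 1)) (b : Bool) :
    disc (n + 1) (univ.filter fun z : Fin (n + 1) → Bool => z i = b)
      = (2 * n).choose n / 2 ^ (n + 1) := by
  simp only [disc, subcube_discrepancy_term, sum_const, card_univ, Fintype.card_fun,
    Fintype.card_bool, Fintype.card_fin, nsmul_eq_mul, ← mul_sum, ← sum_div]
  rw [sum_range_succ, Nat.choose_succ_self, ← Nat.sum_range_choose_sq]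
  push_cast
  field_simp
  ring

/-- For `n ≥ 2`, `Σ_{w=1}^{n−1} C(n−1,w)·2^{n−w}·w·C(w−1,⌈w/2⌉−1) = (n−1)·C(2n−2,n−1)`;
consequently the subcube `C_{n−1} = {0,1}^{n−1}×{0} ⊆ {0,1}^n` has quadratic discrepancy
`D^{L2}(C_{n−1}) = (n/2^{n+1})·C(2n,n) − ((n−1)/2^{n−1})·C(2n−2,n−1)`. -/
theorem discrepancy_subcube (n : ℕ) (hn : 2 ≤ n) :
    (∑ w ∈ Finset.Icc 1 (n - 1),
        (Nat.choose (n - 1) w : ℝ) * 2 ^ (n - w) * w * Nat.choose (w - 1) ((w + 1) / 2 - 1)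
      = ((n : ℝ) - 1) * Nat.choose (2 * n - 2) (n - 1))
    ∧ disc n (Finset.univ.filter
        (fun z : Fin n → Bool => z ⟨n - 1, by omega⟩ = false))
      = (n : ℝ) / 2 ^ (n + 1) * Nat.choose (2 * n) n
        - ((n : ℝ) - 1) / 2 ^ (n - 1) * Nat.choose (2 * n - 2) (n - 1) := by
  obtain ⟨N, rfl⟩ : ∃ N, n = N + 1 := ⟨n - 1, by omega⟩
  have h2N : 2 * (N + 1) - 2 = 2 * N := by omega
  simp only [Nat.add_sub_cancel, h2N, Nat.cast_add_one, add_sub_cancel_right]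
  constructor
  · exact_mod_cast sum_Icc_choose_mul_two_pow_mul_choose N
  · rw [disc_subcube]
    have hcentral : ((N : ℝ) + 1) * (2 * (N + 1)).choose (N + 1)
        = 2 * (2 * N + 1) * (2 * N).choose N := by
      exact_mod_cast Nat.succ_mul_centralBinom_succ N
    rw [div_mul_eq_mul_div, hcentral]
    field_simp
    ring
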